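/- arXiv:1601.04726 — 3 statements merged into one kernel-verified Lean document; each statement's English description precedes it below -/
import Mathlib

section
/- Let γ be a circle of radius r > 0 centered at the origin in ℂ, traversed counterclockwise, and let z₁, ..., zₙ ∈ ℂ all satisfy |z_k| < r. Then χ(zₙ,...,z₁) := (1/(2πi)ⁿ) ∫_{cyclically ordered n-tuples on γ} (dwₙ/(zₙ − wₙ)) ⋯ (dw₁/(z₁ − w₁)) = (−1)ⁿ/(n−1)!. -/
open MeasureTheory Real Complex Metric Set

noncomputable def ff (q : ℂ) (θ : ℝ) : ℂ := -Complex.I / (1 - q * Complex.exp (-(Complex.I * θ)))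

lemma abs_exp_neg_I_mul (w : ℂ) (hw : w.re = 0) : ‖Complex.exp w‖ = 1 := by
  rw [Complex.norm_exp, hw, Real.exp_zero]

lemma den_ne (q : ℂ) (hq : ‖q‖ < 1) (w : ℂ) (hw : ‖w‖ ≤ 1) :
    1 - q * w ≠ 0 := by
  intro h
  have h1 : q * w = 1 := by linear_combination -h
  have : ‖q * w‖ < 1 := by
    rw [norm_mul]
    calc ‖q‖ * ‖w‖ ≤ ‖q‖ * 1 :=
      mul_le_mul_of_nonneg_left hw (norm_nonneg q)
    _ = ‖q‖ := mul_one _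
    _ < 1 := hq
  rw [h1] at this; simp at this

lemma exp_neg_I_abs (θ : ℝ) : ‖Complex.exp (-(Complex.I * θ))‖ = 1 := by
  apply abs_exp_neg_I_mul; simp

lemma ff_den_ne (q : ℂ) (hq : ‖q‖ < 1) (θ : ℝ) :
    1 - q * Complex.exp (-(Complex.I * θ)) ≠ 0 :=
  den_ne q hq _ (le_of_eq (exp_neg_I_abs θ))

lemma ff_cont (q : ℂ) (hq : ‖q‖ < 1) : Continuous (ff q) := by
  apply continuous_const.div
  · fun_prop
  · exact fun θ => ff_den_ne q hq θ

lemma ff_bound (q : ℂ) (hq : ‖q‖ < 1) (θ : ℝ) :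
    ‖ff q θ‖ ≤ (1 - ‖q‖)⁻¹ := by
  have h1 : (0:ℝ) < 1 - ‖q‖ := by linarith
  have h2 : 1 - ‖q‖ ≤ ‖1 - q * Complex.exp (-(Complex.I * θ))‖ := by
    calc 1 - ‖q‖ = ‖(1:ℂ)‖ - ‖q * Complex.exp (-(Complex.I * θ))‖ := by
          rw [norm_one, norm_mul, exp_neg_I_abs, mul_one]
    _ ≤ _ := by
          simpa using
            norm_sub_norm_le (1:ℂ) (q * Complex.exp (-(Complex.I * θ)))
  rw [ff, norm_div]
  simp only [norm_neg, Complex.norm_I]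
  rw [div_eq_mul_inv, one_mul]
  exact inv_anti₀ h1 h2

lemma circle_avg (n : ℕ) (b : Fin n → ℂ) (hb : ∀ k, ‖b k‖ < 1) :
    ∫ t in (0:ℝ)..(2*π), ∏ k, (1 - b k * Complex.exp (-(Complex.I * t)))⁻¹ = 2*π := by
  set F : ℂ → ℂ := fun w => ∏ k, (1 - b k * w)⁻¹ with hF
  have hdiff : DifferentiableOn ℂ F (closedBall (0:ℂ) 1) := by
    apply DifferentiableOn.fun_finset_prod
    intro k _
    apply DifferentiableOn.inv
    · fun_prop
    · intro w hw
      exact den_ne (b k) (hb k) w (by simpa using mem_closedBall_zero_iff.1 hw)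
  have h0 : (0:ℂ) ∈ ball (0:ℂ) 1 := by simp
  have hC := hdiff.circleIntegral_sub_inv_smul h0
  have hF0 : F 0 = 1 := by simp [hF]
  rw [hF0, smul_eq_mul, mul_one] at hC
  -- unfold the circle integral
  have hunf : (∮ (z : ℂ) in C(0, 1), (z - 0)⁻¹ • F z)
      = Complex.I * ∫ t in (0:ℝ)..(2*π), F (Complex.exp (Complex.I * t)) := by
    rw [circleIntegral, ← intervalIntegral.integral_const_mul]
    apply intervalIntegral.integral_congr
    intro t _
    have hne : Complex.exp ((t:ℂ) * Complex.I) ≠ 0 := Complex.exp_ne_zero _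
    simp only [deriv_circleMap, circleMap, smul_eq_mul, sub_zero, zero_add, one_mul,
      Complex.ofReal_one]
    rw [mul_comm Complex.I ((t:ℂ))]
    field_simp
  rw [hunf] at hC
  have key : ∫ t in (0:ℝ)..(2*π), F (Complex.exp (Complex.I * t)) = 2*π := by
    have h2 : Complex.I * ∫ t in (0:ℝ)..(2*π), F (Complex.exp (Complex.I * t))
        = Complex.I * (2*π) := by rw [hC]; ring
    exact mul_left_cancel₀ Complex.I_ne_zero h2
  -- now relate ∫ F(exp(-(I t))) to ∫ F(exp(I t)) by t ↦ -t and periodicity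
  have hper : Function.Periodic (fun t : ℝ => F (Complex.exp (Complex.I * t))) (2*π) := by
    intro t
    simp only
    congr 1
    push_cast
    rw [mul_add, Complex.exp_add]
    simp [mul_comm Complex.I ((2:ℂ)*π), Complex.exp_two_pi_mul_I]
  calc ∫ t in (0:ℝ)..(2*π), F (Complex.exp (-(Complex.I * t)))
      = ∫ t in (-(2*π))..(-(2*π)+2*π), F (Complex.exp (Complex.I * t)) := by
        simpa using intervalIntegral.integral_comp_neg (a := 0) (b := 2*π)
          (fun s : ℝ => F (Complex.exp (Complex.I * s)))
    _ = ∫ t in (0:ℝ)..(0+2*π), F (Complex.exp (Complex.I * t)) :=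
        hper.intervalIntegral_add_eq _ _
    _ = 2*π := by rw [zero_add]; exact key

lemma key_t_integral (n : ℕ) (q : Fin n → ℂ) (hq : ∀ k, ‖q k‖ < 1) (c : Fin n → ℝ) :
    ∫ t in (0:ℝ)..(2*π), ∏ k, ff (q k) (t + c k) = 2 * π * (-Complex.I)^n := by
  set b : Fin n → ℂ := fun k => q k * Complex.exp (-(Complex.I * c k)) with hb
  have hbabs : ∀ k, ‖b k‖ < 1 := by
    intro k
    rw [hb]
    simp only [norm_mul, exp_neg_I_abs, mul_one]
    exact hq k
  have hsplit : ∀ t : ℝ, ∀ k, ff (q k) (t + c k)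
      = -Complex.I * (1 - b k * Complex.exp (-(Complex.I * t)))⁻¹ := by
    intro t k
    rw [ff, div_eq_mul_inv, hb]
    congr 2
    push_cast
    rw [show -(Complex.I * ((t:ℂ) + c k)) = -(Complex.I * c k) + -(Complex.I * t) by ring,
      Complex.exp_add]
    ring
  have : ∀ t : ℝ, ∏ k, ff (q k) (t + c k)
      = (-Complex.I)^n * ∏ k, (1 - b k * Complex.exp (-(Complex.I * t)))⁻¹ := by
    intro t
    rw [Finset.prod_congr rfl (fun k _ => hsplit t k), Finset.prod_mul_distrib,
      Finset.prod_const, Finset.card_univ, Fintype.card_fin]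
  rw [intervalIntegral.integral_congr (g := fun t => (-Complex.I)^n *
      ∏ k, (1 - b k * Complex.exp (-(Complex.I * t)))⁻¹) (fun t _ => this t),
    intervalIntegral.integral_const_mul, circle_avg n b hbabs]
  push_cast
  ring

def SS (m : ℕ) (a : ℝ) : Set (Fin m → ℝ) :=
  {φ | (∀ i j : Fin m, i ≤ j → φ i ≤ φ j) ∧ (∀ j, 0 ≤ φ j) ∧ (∀ j, φ j ≤ a)}

lemma meas_SS (m : ℕ) (a : ℝ) : MeasurableSet (SS m a) := by
  have : SS m a = (⋂ (i : Fin m) (j : Fin m) (_ : i ≤ j), {φ : Fin m → ℝ | φ i ≤ φ j}) ∩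
      ((⋂ j : Fin m, {φ : Fin m → ℝ | 0 ≤ φ j}) ∩ (⋂ j : Fin m, {φ : Fin m → ℝ | φ j ≤ a})) := by
    ext φ; simp [SS]
  rw [this]
  refine MeasurableSet.inter ?_ (MeasurableSet.inter ?_ ?_)
  · exact MeasurableSet.iInter fun i => MeasurableSet.iInter fun j => MeasurableSet.iInter fun _ =>
      measurableSet_le (measurable_pi_apply i) (measurable_pi_apply j)
  · exact MeasurableSet.iInter fun j => measurableSet_le measurable_const (measurable_pi_apply j)
  · exact MeasurableSet.iInter fun j => measurableSet_le (measurable_pi_apply j) measurable_const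

lemma vol_SS : ∀ (m : ℕ) (a : ℝ), 0 ≤ a →
    volume (SS m a) = ENNReal.ofReal (a^m / m.factorial) := by
  intro m
  induction m with
  | zero =>
    intro a _
    have h : SS 0 a = Set.univ := by
      ext φ; simp only [SS, Set.mem_setOf_eq, Set.mem_univ, iff_true]
      exact ⟨fun i => i.elim0, fun j => j.elim0, fun j => j.elim0⟩
    rw [h]
    simp [MeasureTheory.volume_pi, Measure.pi_univ]
  | succ m ih =>
    intro a ha
    set e := MeasurableEquiv.piFinSuccAbove (fun _ : Fin (m+1) => ℝ) 0 with he
    have hmp : MeasurePreserving e volume volume :=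
      volume_preserving_piFinSuccAbove (fun _ : Fin (m+1) => ℝ) 0
    set S' : Set (ℝ × (Fin m → ℝ)) := {p | (0 ≤ p.1 ∧ p.1 ≤ a) ∧ (∀ i j : Fin m, i ≤ j → p.2 i ≤ p.2 j) ∧
      (∀ j, p.1 ≤ p.2 j) ∧ (∀ j, p.2 j ≤ a)} with hS'
    have hS'meas : MeasurableSet S' := by
      have : S' = ({p : ℝ × (Fin m → ℝ) | 0 ≤ p.1} ∩ {p | p.1 ≤ a}) ∩
          ((⋂ (i : Fin m) (j : Fin m) (_ : i ≤ j), {p : ℝ × (Fin m → ℝ) | p.2 i ≤ p.2 j}) ∩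
           ((⋂ j : Fin m, {p : ℝ × (Fin m → ℝ) | p.1 ≤ p.2 j}) ∩
            (⋂ j : Fin m, {p : ℝ × (Fin m → ℝ) | p.2 j ≤ a}))) := by
        ext p; simp only [hS', Set.mem_setOf_eq, Set.mem_inter_iff, Set.mem_iInter]
        try tauto
      rw [this]
      have h1 : Measurable fun p : ℝ × (Fin m → ℝ) => p.1 := measurable_fst
      have h2 : ∀ j : Fin m, Measurable fun p : ℝ × (Fin m → ℝ) => p.2 j :=
        fun j => (measurable_pi_apply j).comp measurable_snd
      refine MeasurableSet.inter (MeasurableSet.inter ?_ ?_) (MeasurableSet.inter ?_ (MeasurableSet.inter ?_ ?_))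
      · exact measurableSet_le measurable_const h1
      · exact measurableSet_le h1 measurable_const
      · exact MeasurableSet.iInter fun i => MeasurableSet.iInter fun j =>
          MeasurableSet.iInter fun _ => measurableSet_le (h2 i) (h2 j)
      · exact MeasurableSet.iInter fun j => measurableSet_le h1 (h2 j)
      · exact MeasurableSet.iInter fun j => measurableSet_le (h2 j) measurable_const
    have hpre : SS (m+1) a = e ⁻¹' S' := by
      ext θ
      simp only [Set.mem_preimage, hS', Set.mem_setOf_eq, he,
        MeasurableEquiv.piFinSuccAbove_apply, Fin.insertNthEquiv, Fin.removeNth]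
      constructor
      · rintro ⟨hmono, h0, hA⟩
        refine ⟨⟨h0 0, hA 0⟩, ?_, ?_, ?_⟩
        · intro i j hij
          exact hmono _ _ (Fin.succ_le_succ_iff.mpr hij)
        · intro j
          exact hmono 0 _ (Fin.zero_le _)
        · intro j
          exact hA _
      · rintro ⟨⟨h00, h0a⟩, hmono, hge, hle⟩
        refine ⟨?_, ?_, ?_⟩
        · intro i j hij
          induction i using Fin.cases with
          | zero =>
            induction j using Fin.cases with
            | zero => exact le_refl _
            | succ j => exact hge j
          | succ i =>
            induction j using Fin.cases with
            | zero => exact absurd (Fin.le_zero_iff.mp hij) (Fin.succ_ne_zero i)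
            | succ j => exact hmono i j (by rwa [Fin.succ_le_succ_iff] at hij)
        · intro j
          induction j using Fin.cases with
          | zero => exact h00
          | succ j => exact le_trans h00 (le_trans (hge j) (le_refl _))
        · intro j
          induction j using Fin.cases with
          | zero => exact h0a
          | succ j => exact hle j
    have hv : volume (SS (m+1) a) = volume S' := by
      rw [hpre]
      exact hmp.measure_preimage hS'meas.nullMeasurableSet
    rw [hv, Measure.volume_eq_prod, Measure.prod_apply hS'meas]
    have hslice : ∀ s : ℝ, volume (Prod.mk s ⁻¹' S')
        = Set.indicator (Set.Icc 0 a) (fun s => ENNReal.ofReal ((a-s)^m / m.factorial)) s := by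
      intro s
      by_cases hs : s ∈ Set.Icc 0 a
      · rw [Set.indicator_of_mem hs]
        have hset : Prod.mk s ⁻¹' S' = (fun ψ : Fin m → ℝ => ψ + (fun _ => -s)) ⁻¹' (SS m (a - s)) := by
          ext ψ
          simp only [Set.mem_preimage, hS', Set.mem_setOf_eq, SS, Pi.add_apply]
          constructor
          · rintro ⟨_, hmono, hge, hle⟩
            exact ⟨fun i j hij => by have := hmono i j hij; linarith,
              fun j => by have := hge j; linarith, fun j => by have := hle j; linarith⟩
          · rintro ⟨hmono, hge, hle⟩
            exact ⟨⟨hs.1, hs.2⟩, fun i j hij => by have := hmono i j hij; linarith,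
              fun j => by have := hge j; linarith, fun j => by have := hle j; linarith⟩
        rw [hset, measure_preimage_add_right, ih (a - s) (by linarith [hs.2])]
      · rw [Set.indicator_of_notMem hs]
        have hset : Prod.mk s ⁻¹' S' = ∅ := by
          ext ψ
          simp only [Set.mem_preimage, hS', Set.mem_setOf_eq, Set.mem_empty_iff_false, iff_false]
          rintro ⟨⟨h1, h2⟩, _⟩
          exact hs ⟨h1, h2⟩
        rw [hset, measure_empty]
    rw [lintegral_congr hslice, lintegral_indicator measurableSet_Icc]
    have hnn : 0 ≤ᶠ[MeasureTheory.ae (volume.restrict (Set.Icc 0 a))]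
        fun s => (a-s)^m / m.factorial := by
      filter_upwards [ae_restrict_mem measurableSet_Icc] with s hs
      have h0 : (0:ℝ) ≤ a - s := by linarith [hs.2]
      exact div_nonneg (pow_nonneg h0 m) (by positivity)
    have hintg : Integrable (fun s => (a-s)^m / m.factorial) (volume.restrict (Set.Icc 0 a)) := by
      apply Continuous.integrableOn_Icc
      fun_prop
    rw [← ofReal_integral_eq_lintegral_ofReal hintg hnn]
    congr 1
    rw [MeasureTheory.integral_Icc_eq_integral_Ioc, ← intervalIntegral.integral_of_le ha]
    have : ∫ s in (0:ℝ)..a, (a-s)^m / m.factorial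
        = (∫ s in (0:ℝ)..a, (a-s)^m) / m.factorial := intervalIntegral.integral_div _ _
    rw [this, intervalIntegral.integral_comp_sub_left (fun x => x^m) a]
    simp only [sub_self, sub_zero]
    rw [integral_pow]
    rw [Nat.factorial_succ]
    push_cast
    field_simp
    try ring

lemma main_calc (m : ℕ) (q : Fin (m+1) → ℂ) (hq : ∀ k, ‖q k‖ < 1) :
    ∫ θ in {θ : Fin (m+1) → ℝ | 0 ≤ θ 0 ∧ θ 0 < 2*π ∧ (∀ i j : Fin (m+1), i ≤ j → θ i ≤ θ j) ∧
        θ (Fin.last m) ≤ θ 0 + 2*π}, ∏ k, ff (q k) (θ k)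
      = (((2*π)^m / m.factorial : ℝ) : ℂ) * (2*π*(-Complex.I)^(m+1)) := by
  have hπ : (0:ℝ) < π := Real.pi_pos
  set g : (Fin (m+1) → ℝ) → ℂ := fun θ => ∏ k, ff (q k) (θ k) with hg
  set D : Set (Fin (m+1) → ℝ) := {θ | 0 ≤ θ 0 ∧ θ 0 < 2*π ∧
    (∀ i j : Fin (m+1), i ≤ j → θ i ≤ θ j) ∧ θ (Fin.last m) ≤ θ 0 + 2*π} with hD
  set e := MeasurableEquiv.piFinSuccAbove (fun _ : Fin (m+1) => ℝ) 0 with he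
  have hmp : MeasurePreserving e volume volume :=
    volume_preserving_piFinSuccAbove (fun _ : Fin (m+1) => ℝ) 0
  set D' : Set (ℝ × (Fin m → ℝ)) := {p | (0 ≤ p.1 ∧ p.1 < 2*π) ∧
    (∀ i j : Fin m, i ≤ j → p.2 i ≤ p.2 j) ∧ (∀ j, p.1 ≤ p.2 j) ∧
    (∀ j, p.2 j ≤ p.1 + 2*π)} with hD'
  set h' : ℝ × (Fin m → ℝ) → ℂ := fun p => ff (q 0) p.1 * ∏ j, ff (q j.succ) (p.2 j) with hh'
  -- continuity of ff's
  have hffc : ∀ k, Continuous (ff (q k)) := fun k => ff_cont _ (hq k)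
  -- uniform bound
  set C : ℝ := ∏ k : Fin (m+1), (1 - ‖q k‖)⁻¹ with hC
  have habs : ∀ (x : Fin (m+1) → ℝ), ‖∏ k, ff (q k) (x k)‖ ≤ C := by
    intro x
    rw [norm_prod]
    exact Finset.prod_le_prod (fun k _ => norm_nonneg _) (fun k _ => ff_bound _ (hq k) _)
  have hsplit : ∀ (t : ℝ) (ψ : Fin m → ℝ), h' (t, ψ) = ∏ k, ff (q k) (Fin.cases t ψ k) := by
    intro t ψ
    rw [Fin.prod_univ_succ]
    simp [hh']
  -- measurability of D'
  have h1m : Measurable fun p : ℝ × (Fin m → ℝ) => p.1 := measurable_fst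
  have h2m : ∀ j : Fin m, Measurable fun p : ℝ × (Fin m → ℝ) => p.2 j :=
    fun j => (measurable_pi_apply j).comp measurable_snd
  have hD'meas : MeasurableSet D' := by
    have : D' = ({p : ℝ × (Fin m → ℝ) | 0 ≤ p.1} ∩ {p | p.1 < 2*π}) ∩
        ((⋂ (i : Fin m) (j : Fin m) (_ : i ≤ j), {p : ℝ × (Fin m → ℝ) | p.2 i ≤ p.2 j}) ∩
         ((⋂ j : Fin m, {p : ℝ × (Fin m → ℝ) | p.1 ≤ p.2 j}) ∩
          (⋂ j : Fin m, {p : ℝ × (Fin m → ℝ) | p.2 j ≤ p.1 + 2*π}))) := by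
      ext p
      simp only [hD', Set.mem_setOf_eq, Set.mem_inter_iff, Set.mem_iInter]
      try tauto
    rw [this]
    refine MeasurableSet.inter (MeasurableSet.inter ?_ ?_)
      (MeasurableSet.inter ?_ (MeasurableSet.inter ?_ ?_))
    · exact measurableSet_le measurable_const h1m
    · exact measurableSet_lt h1m measurable_const
    · exact MeasurableSet.iInter fun i => MeasurableSet.iInter fun j =>
        MeasurableSet.iInter fun _ => measurableSet_le (h2m i) (h2m j)
    · exact MeasurableSet.iInter fun j => measurableSet_le h1m (h2m j)
    · exact MeasurableSet.iInter fun j => measurableSet_le (h2m j) (h1m.add_const _)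
  have hDmeas : MeasurableSet D := by
    rw [hD]
    have : {θ : Fin (m+1) → ℝ | 0 ≤ θ 0 ∧ θ 0 < 2*π ∧
        (∀ i j : Fin (m+1), i ≤ j → θ i ≤ θ j) ∧ θ (Fin.last m) ≤ θ 0 + 2*π}
        = ({θ : Fin (m+1) → ℝ | 0 ≤ θ 0} ∩ {θ | θ 0 < 2*π}) ∩
        ((⋂ (i : Fin (m+1)) (j : Fin (m+1)) (_ : i ≤ j), {θ : Fin (m+1) → ℝ | θ i ≤ θ j}) ∩
         {θ : Fin (m+1) → ℝ | θ (Fin.last m) ≤ θ 0 + 2*π}) := by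
      ext θ
      simp only [Set.mem_setOf_eq, Set.mem_inter_iff, Set.mem_iInter]
      try tauto
    rw [this]
    refine MeasurableSet.inter (MeasurableSet.inter ?_ ?_) (MeasurableSet.inter ?_ ?_)
    · exact measurableSet_le measurable_const (measurable_pi_apply 0)
    · exact measurableSet_lt (measurable_pi_apply 0) measurable_const
    · exact MeasurableSet.iInter fun i => MeasurableSet.iInter fun j =>
        MeasurableSet.iInter fun _ =>
          measurableSet_le (measurable_pi_apply i) (measurable_pi_apply j)
    · exact measurableSet_le (measurable_pi_apply _) ((measurable_pi_apply _).add_const _)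
  -- D = e ⁻¹' D'
  have hDpre : D = e ⁻¹' D' := by
    ext θ
    simp only [hD, hD', Set.mem_preimage, Set.mem_setOf_eq, he,
      MeasurableEquiv.piFinSuccAbove_apply, Fin.insertNthEquiv, Fin.removeNth,
      Fin.zero_succAbove]
    constructor
    · rintro ⟨h0, h2, hmono, hlast⟩
      refine ⟨⟨h0, h2⟩, fun i j hij => hmono _ _ (Fin.succ_le_succ_iff.mpr hij),
        fun j => hmono 0 _ (Fin.zero_le _), fun j => le_trans (hmono _ _ ?_) hlast⟩
      exact Fin.le_last _
    · rintro ⟨⟨h0, h2⟩, hmono, hge, hle⟩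
      have hall : ∀ j : Fin (m+1), θ j ≤ θ 0 + 2*π := by
        intro j
        induction j using Fin.cases with
        | zero => linarith
        | succ j => exact hle j
      refine ⟨h0, h2, ?_, hall _⟩
      intro i j hij
      induction i using Fin.cases with
      | zero =>
        induction j using Fin.cases with
        | zero => exact le_refl _
        | succ j => exact hge j
      | succ i =>
        induction j using Fin.cases with
        | zero => exact absurd (Fin.le_zero_iff.mp hij) (Fin.succ_ne_zero i)
        | succ j => exact hmono i j (by rwa [Fin.succ_le_succ_iff] at hij)
  have hcomp : ∀ θ, g θ = h' (e θ) := by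
    intro θ
    rw [hg, hsplit]
    simp only [he, MeasurableEquiv.piFinSuccAbove_apply, Fin.insertNthEquiv, Fin.removeNth,
      Fin.zero_succAbove]
    apply Finset.prod_congr rfl
    intro k _
    congr 1
    induction k using Fin.cases with
    | zero => simp
    | succ k => simp [Fin.tail]
  -- continuity of h'
  have hcont : Continuous h' := by
    apply Continuous.mul
    · exact (hffc 0).comp continuous_fst
    · exact continuous_finset_prod _ fun j _ =>
        (hffc j.succ).comp ((continuous_apply j).comp continuous_snd)
  -- D' inside a compact box
  have hbox : D' ⊆ Set.Icc ((0:ℝ), (fun _ => 0 : Fin m → ℝ)) (2*π, fun _ => 4*π) := by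
    rintro ⟨t, ψ⟩ ⟨⟨ht0, ht2⟩, _, hge, hle⟩
    simp only [Set.mem_Icc, Prod.mk_le_mk, Pi.le_def]
    exact ⟨⟨ht0, fun j => le_trans ht0 (hge j)⟩,
      ⟨le_of_lt ht2, fun j => by have := hle j; linarith⟩⟩
  have hIntOn : IntegrableOn h' D' := by
    refine IntegrableOn.mono_set ?_ hbox
    exact ContinuousOn.integrableOn_compact isCompact_Icc hcont.continuousOn
  -- Step A: pull back along e
  have stepA : ∫ θ in D, g θ = ∫ p in D', h' p := by
    rw [← integral_indicator hDmeas, ← integral_indicator hD'meas]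
    rw [← hmp.integral_comp e.measurableEmbedding (D'.indicator h')]
    congr 1
    funext θ
    rw [hDpre]
    have : (e ⁻¹' D').indicator g θ = (e ⁻¹' D').indicator (fun x => h' (e x)) θ := by
      by_cases hx : θ ∈ e ⁻¹' D' <;> simp [hx, hcomp θ]
    rw [this]
    exact Set.indicator_comp_right (f := ⇑e) (g := h') (s := D')
  -- Step B: Fubini
  have hIndInt : Integrable (D'.indicator h') := hIntOn.integrable_indicator hD'meas
  have stepB : ∫ p in D', h' p = ∫ t : ℝ, ∫ ψ : Fin m → ℝ, D'.indicator h' (t, ψ) := by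
    rw [← integral_indicator hD'meas]
    rw [Measure.volume_eq_prod] at hIndInt ⊢
    exact integral_prod _ hIndInt
  -- Step C: inner integral as indicator over Ico
  set A : ℝ → Set (Fin m → ℝ) := fun t => {ψ | (∀ i j : Fin m, i ≤ j → ψ i ≤ ψ j) ∧
    (∀ j, t ≤ ψ j) ∧ (∀ j, ψ j ≤ t + 2*π)} with hA
  have hmemD' : ∀ (t : ℝ) (ψ : Fin m → ℝ), (t, ψ) ∈ D' ↔ t ∈ Set.Ico 0 (2*π) ∧ ψ ∈ A t := by
    intro t ψ
    simp only [hD', hA, Set.mem_setOf_eq, Set.mem_Ico]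
    try tauto
  have stepC : (fun t : ℝ => ∫ ψ : Fin m → ℝ, D'.indicator h' (t, ψ))
      = (Set.Ico 0 (2*π)).indicator (fun t => ∫ ψ in A t, h' (t, ψ)) := by
    funext t
    by_cases ht : t ∈ Set.Ico 0 (2*π)
    · rw [Set.indicator_of_mem ht]
      have : ∀ ψ, D'.indicator h' (t, ψ) = (A t).indicator (fun ψ => h' (t, ψ)) ψ := by
        intro ψ
        by_cases hψ : ψ ∈ A t
        · rw [Set.indicator_of_mem ((hmemD' t ψ).mpr ⟨ht, hψ⟩), Set.indicator_of_mem hψ]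
        · rw [Set.indicator_of_notMem (fun hc => hψ (((hmemD' t ψ).mp hc).2)),
            Set.indicator_of_notMem hψ]
      rw [funext this]
      have hAmeas : MeasurableSet (A t) := by
        have : A t = (⋂ (i : Fin m) (j : Fin m) (_ : i ≤ j), {ψ : Fin m → ℝ | ψ i ≤ ψ j}) ∩
            ((⋂ j : Fin m, {ψ : Fin m → ℝ | t ≤ ψ j}) ∩
             (⋂ j : Fin m, {ψ : Fin m → ℝ | ψ j ≤ t + 2*π})) := by
          ext ψ
          simp only [hA, Set.mem_setOf_eq, Set.mem_inter_iff, Set.mem_iInter]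
          try tauto
        rw [this]
        refine MeasurableSet.inter ?_ (MeasurableSet.inter ?_ ?_)
        · exact MeasurableSet.iInter fun i => MeasurableSet.iInter fun j =>
            MeasurableSet.iInter fun _ =>
              measurableSet_le (measurable_pi_apply i) (measurable_pi_apply j)
        · exact MeasurableSet.iInter fun j => measurableSet_le measurable_const (measurable_pi_apply j)
        · exact MeasurableSet.iInter fun j => measurableSet_le (measurable_pi_apply j) measurable_const
      exact integral_indicator hAmeas
    · rw [Set.indicator_of_notMem ht]
      have : ∀ ψ, D'.indicator h' (t, ψ) = 0 := by
        intro ψ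
        exact Set.indicator_of_notMem (fun hc => ht (((hmemD' t ψ).mp hc).1)) _
      simp [this]
  -- Step D: translation in the inner integral
  set W : ℝ → (Fin m → ℝ) → ℂ := fun t φ => ff (q 0) t * ∏ j, ff (q j.succ) (φ j + t) with hW
  have stepD : ∀ t : ℝ, (∫ ψ in A t, h' (t, ψ)) = ∫ φ in SS m (2*π), W t φ := by
    intro t
    have hAmem : ∀ φ : Fin m → ℝ, (φ + (fun _ => t)) ∈ A t ↔ φ ∈ SS m (2*π) := by
      intro φ
      simp only [hA, SS, Set.mem_setOf_eq, Pi.add_apply]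
      constructor
      · rintro ⟨hmono, hge, hle⟩
        exact ⟨fun i j hij => by have := hmono i j hij; linarith,
          fun j => by have := hge j; linarith, fun j => by have := hle j; linarith⟩
      · rintro ⟨hmono, hge, hle⟩
        exact ⟨fun i j hij => by have := hmono i j hij; linarith,
          fun j => by have := hge j; linarith, fun j => by have := hle j; linarith⟩
    rw [← integral_indicator (by
      -- A t is measurable
      have : A t = (⋂ (i : Fin m) (j : Fin m) (_ : i ≤ j), {ψ : Fin m → ℝ | ψ i ≤ ψ j}) ∩
          ((⋂ j : Fin m, {ψ : Fin m → ℝ | t ≤ ψ j}) ∩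
           (⋂ j : Fin m, {ψ : Fin m → ℝ | ψ j ≤ t + 2*π})) := by
        ext ψ
        simp only [hA, Set.mem_setOf_eq, Set.mem_inter_iff, Set.mem_iInter]
        try tauto
      rw [this]
      refine MeasurableSet.inter ?_ (MeasurableSet.inter ?_ ?_)
      · exact MeasurableSet.iInter fun i => MeasurableSet.iInter fun j =>
          MeasurableSet.iInter fun _ =>
            measurableSet_le (measurable_pi_apply i) (measurable_pi_apply j)
      · exact MeasurableSet.iInter fun j => measurableSet_le measurable_const (measurable_pi_apply j)
      · exact MeasurableSet.iInter fun j => measurableSet_le (measurable_pi_apply j) measurable_const),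
      ← integral_indicator (meas_SS m (2*π))]
    rw [← integral_add_right_eq_self (μ := (volume : Measure (Fin m → ℝ)))
      (fun ψ => (A t).indicator (fun ψ' => h' (t, ψ')) ψ) (fun _ => t)]
    congr 1
    funext φ
    by_cases hφ : φ ∈ SS m (2*π)
    · rw [Set.indicator_of_mem ((hAmem φ).mpr hφ), Set.indicator_of_mem hφ]
      rw [hh', hW]
      simp only [Pi.add_apply]
    · rw [Set.indicator_of_notMem (fun hc => hφ ((hAmem φ).mp hc)),
        Set.indicator_of_notMem hφ]
  -- Step E: swap the two integrals
  haveI i1 : IsFiniteMeasure (volume.restrict (Set.Ico (0:ℝ) (2*π))) := by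
    constructor
    rw [Measure.restrict_apply_univ, Real.volume_Ico]
    exact ENNReal.ofReal_lt_top
  haveI i2 : IsFiniteMeasure (volume.restrict (SS m (2*π))) := by
    constructor
    rw [Measure.restrict_apply_univ, vol_SS m (2*π) (by positivity)]
    exact ENNReal.ofReal_lt_top
  have hWcont : Continuous (Function.uncurry W) := by
    apply Continuous.mul
    · exact (hffc 0).comp continuous_fst
    · exact continuous_finset_prod _ fun j _ =>
        (hffc j.succ).comp (((continuous_apply j).comp continuous_snd).add continuous_fst)
  have hWbound : ∀ p : ℝ × (Fin m → ℝ), ‖Function.uncurry W p‖ ≤ C := by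
    intro p
    have : Function.uncurry W p = ∏ k, ff (q k) (Fin.cases p.1 (fun j => p.2 j + p.1) k) := by
      rw [Function.uncurry, hW, Fin.prod_univ_succ]
      simp
    rw [this]
    exact habs _
  have hWint : Integrable (Function.uncurry W)
      ((volume.restrict (Set.Ico (0:ℝ) (2*π))).prod (volume.restrict (SS m (2*π)))) := by
    apply Integrable.mono' (integrable_const C) hWcont.aestronglyMeasurable
    exact Filter.Eventually.of_forall hWbound
  have stepE : ∫ t in Set.Ico (0:ℝ) (2*π), ∫ φ in SS m (2*π), W t φ
      = ∫ φ in SS m (2*π), ∫ t in Set.Ico (0:ℝ) (2*π), W t φ :=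
    integral_integral_swap hWint
  -- Step F: inner t-integral via the key lemma
  have stepF : ∀ φ : Fin m → ℝ, (∫ t in Set.Ico (0:ℝ) (2*π), W t φ)
      = 2*π*(-Complex.I)^(m+1) := by
    intro φ
    rw [integral_Ico_eq_integral_Ioo, ← integral_Ioc_eq_integral_Ioo,
      ← intervalIntegral.integral_of_le (by positivity)]
    rw [← key_t_integral (m+1) q hq (Fin.cases 0 φ)]
    apply intervalIntegral.integral_congr
    intro t _
    rw [hW]
    simp only
    rw [Fin.prod_univ_succ]
    simp only [Fin.cases_zero, Fin.cases_succ, add_zero]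
    congr 1
    exact Finset.prod_congr rfl fun j _ => by rw [add_comm]
  -- put everything together
  rw [stepA, stepB]
  rw [stepC, integral_indicator measurableSet_Ico]
  have : ∫ t in Set.Ico (0:ℝ) (2*π), ∫ ψ in A t, h' (t, ψ)
      = ∫ t in Set.Ico (0:ℝ) (2*π), ∫ φ in SS m (2*π), W t φ := by
    apply setIntegral_congr_fun measurableSet_Ico
    intro t _
    exact stepD t
  rw [this, stepE]
  rw [setIntegral_congr_fun (meas_SS m (2*π)) (fun φ _ => stepF φ)]
  rw [setIntegral_const, Measure.real, vol_SS m (2*π) (by positivity),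
    ENNReal.toReal_ofReal (by positivity)]
  rw [real_smul]

/-- For the circle of radius `r` centered at the origin, traversed counterclockwise, and points
`z₁, ..., zₙ` all inside the circle (`|z_k| < r`), the cyclic iterated integral
`χ(zₙ,...,z₁) = (1/(2πi)ⁿ) ∫_{cyclically ordered n-tuples on the circle}
  dwₙ/(zₙ − wₙ) ⋯ dw₁/(z₁ − w₁)`
equals `(−1)ⁿ/(n−1)!`.  Here `w_k = r e^{iθ_k}`, `dw_k = i r e^{iθ_k} dθ_k`, and the domain is
`θ₁ ∈ [0,2π)`, `θ₁ ≤ θ₂ ≤ ⋯ ≤ θₙ ≤ θ₁ + 2π`. -/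
theorem cyclic_iterated_integral_circle_inside (n : ℕ) (hn : 0 < n) (r : ℝ) (hr : 0 < r)
    (z : Fin n → ℂ) (hz : ∀ k, ‖z k‖ < r) :
    (1 / (2 * (π : ℂ) * Complex.I)) ^ n *
      ∫ θ in {θ : Fin n → ℝ |
          0 ≤ θ ⟨0, hn⟩ ∧ θ ⟨0, hn⟩ < 2 * π ∧
          (∀ i j : Fin n, i ≤ j → θ i ≤ θ j) ∧
          θ ⟨n - 1, Nat.sub_lt hn Nat.one_pos⟩ ≤ θ ⟨0, hn⟩ + 2 * π},
        ∏ k : Fin n,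
          (Complex.I * r * Complex.exp (Complex.I * (θ k : ℂ))) /
            (z k - r * Complex.exp (Complex.I * (θ k : ℂ)))
      = (-1) ^ n / (Nat.factorial (n - 1) : ℂ) := by
  obtain ⟨m, rfl⟩ : ∃ m, n = m + 1 := ⟨n - 1, by omega⟩
  have hπ := Real.pi_pos
  set q : Fin (m+1) → ℂ := fun k => z k / (r:ℂ) with hqdef
  have hq : ∀ k, ‖q k‖ < 1 := by
    intro k
    rw [hqdef]
    simp only
    rw [norm_div, Complex.norm_real, Real.norm_of_nonneg hr.le, div_lt_one hr]
    exact hz k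
  have h0 : (⟨0, hn⟩ : Fin (m+1)) = 0 := by ext; simp
  have hlast : (⟨m+1-1, Nat.sub_lt hn Nat.one_pos⟩ : Fin (m+1)) = Fin.last m := by
    ext; simp [Fin.last]
  have hint : ∀ θ : Fin (m+1) → ℝ,
      (∏ k : Fin (m+1), (Complex.I * r * Complex.exp (Complex.I * (θ k : ℂ))) /
        (z k - r * Complex.exp (Complex.I * (θ k : ℂ)))) = ∏ k, ff (q k) (θ k) := by
    intro θ
    refine Finset.prod_congr rfl fun k _ => ?_
    have hexp0 : Complex.exp (Complex.I * (θ k : ℂ)) ≠ 0 := Complex.exp_ne_zero _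
    have hr0 : (r:ℂ) ≠ 0 := by
      simp only [ne_eq, Complex.ofReal_eq_zero]
      exact hr.ne'
    have habs1 : ‖(r:ℂ) * Complex.exp (Complex.I * (θ k : ℂ))‖ = r := by
      rw [norm_mul, Complex.norm_real, Real.norm_of_nonneg hr.le, abs_exp_neg_I_mul _ (by simp), mul_one]
    have hden1 : z k - r * Complex.exp (Complex.I * (θ k : ℂ)) ≠ 0 := by
      intro h
      have h1 : z k = (r:ℂ) * Complex.exp (Complex.I * (θ k : ℂ)) := by linear_combination h
      have h2 := hz k
      rw [h1, habs1] at h2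
      exact lt_irrefl _ h2
    have hden2 := ff_den_ne (q k) (hq k) (θ k)
    rw [ff]
    rw [Complex.exp_neg] at hden2 ⊢
    rw [div_eq_div_iff hden1 hden2]
    rw [hqdef]
    field_simp
    ring
  simp only [h0, hlast, hint]
  rw [main_calc m q hq]
  have hfac : ((m.factorial : ℂ)) ≠ 0 := by
    exact_mod_cast Nat.cast_ne_zero.mpr m.factorial_ne_zero
  have hπ0 : (π:ℂ) ≠ 0 := by
    simp only [ne_eq, Complex.ofReal_eq_zero]
    exact Real.pi_ne_zero
  have h1 : (1/(2*(π:ℂ)*Complex.I)) * (2*(π:ℂ)*(-Complex.I)) = -1 := by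
    field_simp
  have hfaceq : (m + 1 - 1).factorial = m.factorial := by norm_num
  rw [hfaceq]
  push_cast
  rw [← h1, mul_pow]
  field_simp
  calc _ = (1/(2*(π:ℂ)*Complex.I))^(m+1) * (2*(π:ℂ)*(-Complex.I))^(m+1) := by
        rw [mul_pow (2*(π:ℂ)), mul_pow (2:ℂ)]; ring
    _ = _ := by rw [← mul_pow, h1]
end

section
/- Let γ be a circle of radius r centered at the origin in ℂ and let z₁, ..., zₙ ∈ ℂ all satisfy |z_k| > r (all points outside the circle). Then the cyclic iterated integral χ(zₙ,...,z₁) = (1/(2πi)ⁿ) ∫_{cyclically ordered n-tuples on γ} (dwₙ/(zₙ − wₙ)) ⋯ (dw₁/(z₁ − w₁)) equals 0. -/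
open MeasureTheory Real Complex

/-!
Each form `i r w / (z_k - r w)`, `w = e^{iθ}`, is `F (e^{iθ})` with `F` holomorphic on a disc of
radius `‖z_k‖ / r > 1` and `F 0 = 0`. Such functions of `θ` (those with only nonnegative Fourier
frequencies) form an algebra, and those with `F 0 = 0` have primitives of the same kind, which are
`2π`-periodic, so their integral over a period vanishes. Integrating out the variables one at a
time, the iterated integral over `x ≤ θ₁ ≤ ⋯ ≤ θₘ ≤ y` is a finite sum `∑ pᵢ(x) qᵢ(y)` of products
of such functions. On the cyclic domain `y = x + 2π`, so by periodicity the outermost integrand is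
`g · ∑ pᵢ qᵢ`, again of this kind with `F 0 = 0`, and its integral over `[0, 2π]` vanishes.
-/

open Metric Set

/-- The Fourier series of `f` has only nonnegative frequencies, and constant term `c`. -/
def HasDiskExtension (f : ℝ → ℂ) (c : ℂ) : Prop :=
  ∃ F : ℂ → ℂ, ∃ R > 1, DifferentiableOn ℂ F (ball 0 R) ∧ F 0 = c ∧ ∀ t : ℝ, f t = F (exp (I * t))

lemma exp_I_mul_mem_ball {R : ℝ} (hR : 1 < R) (t : ℝ) : exp (I * t) ∈ ball (0 : ℂ) R := by
  simpa [mul_comm] using hR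

namespace HasDiskExtension

variable {f g : ℝ → ℂ} {a b : ℂ}

lemma const (c : ℂ) : HasDiskExtension (fun _ => c) c :=
  ⟨fun _ => c, 2, one_lt_two, differentiableOn_const c, rfl, fun _ => rfl⟩

lemma mul (hf : HasDiskExtension f a) (hg : HasDiskExtension g b) :
    HasDiskExtension (fun t => f t * g t) (a * b) := by
  obtain ⟨F, R, hR, hF, rfl, hfF⟩ := hf
  obtain ⟨G, S, hS, hG, rfl, hgG⟩ := hg
  exact ⟨F * G, min R S, lt_min hR hS,
    (hF.mono (ball_subset_ball (min_le_left R S))).mul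
      (hG.mono (ball_subset_ball (min_le_right R S))),
    rfl, fun t => show f t * g t = _ by rw [hfF, hgG]; rfl⟩

lemma continuous (hf : HasDiskExtension f a) : Continuous f := by
  obtain ⟨F, R, hR, hF, -, hfF⟩ := hf
  rw [funext hfF]
  exact hF.continuousOn.comp_continuous (by fun_prop) (exp_I_mul_mem_ball hR)

lemma periodic (hf : HasDiskExtension f a) : Function.Periodic f (2 * π) := by
  obtain ⟨F, -, -, -, -, hfF⟩ := hf
  intro t
  rw [hfF, hfF, ofReal_add, mul_add, Complex.exp_add, ofReal_mul, ofReal_ofNat,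
    show I * (2 * π) = 2 * π * I by ring, exp_two_pi_mul_I, mul_one]

lemma exists_hasDerivAt (hf : HasDiskExtension f 0) :
    ∃ P : ℝ → ℂ, (∃ c, HasDiskExtension P c) ∧ ∀ t, HasDerivAt P (f t) t := by
  obtain ⟨F, R, hR, hF, hF0, hfF⟩ := hf
  have hslope : DifferentiableOn ℂ (fun w => -I * dslope F 0 w) (ball 0 R) :=
    ((differentiableOn_dslope (ball_mem_nhds 0 (by linarith))).2 hF).const_mul (-I)
  -- `P t = H (exp (I * t))` where `H' w = F w / (I * w)`, holomorphic since `F 0 = 0`.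
  obtain ⟨H, hH⟩ := hslope.isExactOn_ball
  refine ⟨fun t => H (exp (I * t)), ⟨H 0, H, R, hR,
    fun w hw => (hH w hw).differentiableAt.differentiableWithinAt, rfl, fun _ => rfl⟩, fun t => ?_⟩
  have hexp : HasDerivAt (fun u : ℂ => exp (I * u)) (exp (I * t) * (I * 1)) t :=
    ((hasDerivAt_id (t : ℂ)).const_mul I).cexp
  refine (((hH _ (exp_I_mul_mem_ball hR t)).comp (t : ℂ) hexp).comp_ofReal).congr_deriv ?_
  have := sub_smul_dslope F 0 (exp (I * t))
  rw [hF0, smul_eq_mul, sub_zero, sub_zero] at this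
  rw [hfF]
  linear_combination this - exp (I * t) * dslope F 0 (exp (I * t)) * I_sq

lemma intervalIntegral_eq_zero (hf : HasDiskExtension f 0) : ∫ t in (0)..(2 * π), f t = 0 := by
  obtain ⟨P, ⟨c, hP⟩, hPf⟩ := hf.exists_hasDerivAt
  rw [intervalIntegral.integral_eq_sub_of_hasDerivAt (fun t _ => hPf t)
    (hf.continuous.intervalIntegrable _ _), hP.periodic.eq, sub_self]

end HasDiskExtension

lemma hasDiskExtension_kernel {r : ℝ} {z : ℂ} (hr : 0 < r) (hz : r < ‖z‖) :
    HasDiskExtension (fun t => I * r * exp (I * t) / (z - r * exp (I * t))) 0 := by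
  refine ⟨fun w => I * r * w / (z - r * w), ‖z‖ / r, (one_lt_div hr).2 hz,
    DifferentiableOn.div (by fun_prop) (by fun_prop) fun w hw => ?_, by simp, fun _ => rfl⟩
  rw [mem_ball_zero_iff, lt_div_iff₀ hr] at hw
  rw [sub_ne_zero]
  rintro rfl
  simp [abs_of_pos hr] at hw
  linarith

lemma Fin.monotone_cons {α : Type*} [Preorder α] {n : ℕ} {a : α} {f : Fin n → α} :
    Monotone (Fin.cons a f : Fin (n + 1) → α) ↔ (∀ i, a ≤ f i) ∧ Monotone f := by
  simpa only [monotone_iff_forall_lt] using! Fin.liftFun_cons (· ≤ ·) (f := f) (a := a)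

theorem setIntegral_fin_cons {E : Type*} [NormedAddCommGroup E] [NormedSpace ℝ E] {n : ℕ}
    {A : Set ℝ} {S : ℝ → Set (Fin n → ℝ)} {f : (Fin (n + 1) → ℝ) → E} (hA : MeasurableSet A)
    (hT : MeasurableSet {θ : Fin (n + 1) → ℝ | θ 0 ∈ A ∧ Fin.tail θ ∈ S (θ 0)})
    (hf : IntegrableOn f {θ : Fin (n + 1) → ℝ | θ 0 ∈ A ∧ Fin.tail θ ∈ S (θ 0)}) :
    ∫ θ in {θ : Fin (n + 1) → ℝ | θ 0 ∈ A ∧ Fin.tail θ ∈ S (θ 0)}, f θ =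
      ∫ t in A, ∫ θ in S t, f (Fin.cons t θ) := by
  set T := {θ : Fin (n + 1) → ℝ | θ 0 ∈ A ∧ Fin.tail θ ∈ S (θ 0)}
  set e := (MeasurableEquiv.piFinSuccAbove (fun _ : Fin (n + 1) => ℝ) 0).symm
  have he : ∀ p, e p = Fin.cons p.1 p.2 := fun p => by
    simp [e, MeasurableEquiv.piFinSuccAbove_symm_apply, Fin.insertNthEquiv]
  have hpres : MeasurePreserving e (volume.prod volume) volume :=
    (volume_preserving_piFinSuccAbove (fun _ : Fin (n + 1) => ℝ) 0).symm
  have hfiber : ∀ t θ, T.indicator f (e (t, θ)) =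
      A.indicator (fun t => (S t).indicator (fun θ => f (Fin.cons t θ)) θ) t := by
    intro t θ
    by_cases ht : t ∈ A <;> by_cases hθ : θ ∈ S t <;> simp [T, he, indicator, ht, hθ]
  have hS : ∀ t ∈ A, MeasurableSet (S t) := fun t ht => by
    convert hT.preimage (e.measurable.comp measurable_prodMk_left) (f := fun θ => e (t, θ))
    ext θ; simp [T, he, ht]
  rw [← integral_indicator hT, ← hpres.integral_comp', integral_prod _ ?_, ← integral_indicator hA]
  · refine integral_congr_ae (Filter.Eventually.of_forall fun t => ?_)
    simp only [hfiber]
    by_cases ht : t ∈ A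
    · simp [indicator_of_mem ht, integral_indicator (hS t ht)]
    · simp [indicator_of_notMem ht]
  · exact (hpres.integrable_comp_emb e.measurableEmbedding).2 (hf.integrable_indicator hT)

def orderedSimplex (n : ℕ) (x y : ℝ) : Set (Fin n → ℝ) :=
  {θ | Monotone θ} ∩ univ.pi fun _ => Icc x y

lemma isCompact_orderedSimplex (n : ℕ) (x y : ℝ) : IsCompact (orderedSimplex n x y) :=
  (isCompact_univ_pi fun _ => isCompact_Icc).inter_left isClosed_monotone

lemma orderedSimplex_succ (n : ℕ) (x y : ℝ) :
    orderedSimplex (n + 1) x y =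
      {θ : Fin (n + 1) → ℝ | θ 0 ∈ Icc x y ∧ Fin.tail θ ∈ orderedSimplex n (θ 0) y} := by
  ext θ
  rw [← Fin.cons_self_tail θ]
  simp only [orderedSimplex, mem_inter_iff, mem_ofPred_eq, Fin.monotone_cons, mem_univ_pi,
    Fin.forall_fin_succ, Fin.cons_zero, Fin.cons_succ, Fin.tail_cons, mem_Icc]
  constructor
  · rintro ⟨⟨hle, hmono⟩, hx, hy⟩
    exact ⟨hx, hmono, fun i => ⟨hle i, (hy i).2⟩⟩
  · rintro ⟨hx, hmono, hy⟩
    exact ⟨⟨fun i => (hy i).1, hmono⟩, hx, fun i => ⟨hx.1.trans (hy i).1, (hy i).2⟩⟩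

noncomputable def iteratedIntegral : (n : ℕ) → (Fin n → ℝ → ℂ) → ℝ → ℝ → ℂ
  | 0, _, _, _ => 1
  | n + 1, g, x, y => ∫ t in x..y, g 0 t * iteratedIntegral n (Fin.tail g) t y

lemma integrableOn_prod_apply_of_continuous {n : ℕ} {g : Fin n → ℝ → ℂ}
    (hg : ∀ i, Continuous (g i)) {K : Set (Fin n → ℝ)} (hK : IsCompact K) :
    IntegrableOn (fun θ => ∏ i, g i (θ i)) K :=
  (continuous_finsetProd _ fun i _ => (hg i).comp (continuous_apply i)).continuousOn
    |>.integrableOn_compact hK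

theorem setIntegral_orderedSimplex {n : ℕ} {g : Fin n → ℝ → ℂ} (hg : ∀ i, Continuous (g i))
    {x y : ℝ} (hxy : x ≤ y) :
    ∫ θ in orderedSimplex n x y, ∏ i, g i (θ i) = iteratedIntegral n g x y := by
  induction n generalizing x with
  | zero =>
    have huniv : orderedSimplex 0 x y = univ :=
      eq_univ_of_forall fun θ => ⟨fun i => i.elim0, fun i => i.elim0⟩
    simp [huniv, iteratedIntegral, volume_pi, Measure.real]
  | succ n ih =>
    rw [orderedSimplex_succ,
      setIntegral_fin_cons (S := fun t => orderedSimplex n t y) measurableSet_Icc,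
      iteratedIntegral, intervalIntegral.integral_of_le hxy, ← integral_Icc_eq_integral_Ioc]
    · refine setIntegral_congr_fun measurableSet_Icc fun t ht => ?_
      simp only [Fin.prod_univ_succ, Fin.cons_zero, Fin.cons_succ]
      rw [integral_const_mul, ih (fun i => hg i.succ) ht.2]
      rfl
    · rw [← orderedSimplex_succ]
      exact (isCompact_orderedSimplex _ x y).isClosed.measurableSet
    · rw [← orderedSimplex_succ]
      exact integrableOn_prod_apply_of_continuous hg (isCompact_orderedSimplex _ x y)

def cyclicSimplex (m : ℕ) : Set (Fin (m + 1) → ℝ) :=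
  {θ | 0 ≤ θ 0 ∧ θ 0 < 2 * π ∧ Monotone θ ∧ θ (Fin.last m) ≤ θ 0 + 2 * π}

lemma cyclicSimplex_eq (m : ℕ) :
    cyclicSimplex m = {θ : Fin (m + 1) → ℝ |
      θ 0 ∈ Ico 0 (2 * π) ∧ Fin.tail θ ∈ orderedSimplex m (θ 0) (θ 0 + 2 * π)} := by
  ext θ
  obtain ⟨t, θ', rfl⟩ : ∃ t θ', θ = Fin.cons t θ' := ⟨_, _, (Fin.cons_self_tail θ).symm⟩
  simp only [cyclicSimplex, orderedSimplex, mem_inter_iff, mem_ofPred_eq, mem_univ_pi,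
    Fin.cons_zero, Fin.tail_cons, mem_Icc, mem_Ico]
  constructor
  · rintro ⟨h0, h2π, hmono, hlast⟩
    obtain ⟨hle, hmono'⟩ := Fin.monotone_cons.1 hmono
    refine ⟨⟨h0, h2π⟩, hmono', fun i => ⟨hle i, ?_⟩⟩
    simpa using (hmono (Fin.le_last i.succ)).trans hlast
  · rintro ⟨⟨h0, h2π⟩, hmono, hθ'⟩
    refine ⟨h0, h2π, Fin.monotone_cons.2 ⟨fun i => (hθ' i).1, hmono⟩, ?_⟩
    induction Fin.last m using Fin.cases with
    | zero => simpa using two_pi_pos.le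
    | succ i => simpa using (hθ' i).2

lemma cyclicSimplex_subset_orderedSimplex (m : ℕ) :
    cyclicSimplex m ⊆ orderedSimplex (m + 1) 0 (4 * π) := by
  rintro θ ⟨h0, h2π, hmono, hlast⟩
  exact ⟨hmono, fun i _ => ⟨h0.trans (hmono (Fin.zero_le i)),
    (hmono (Fin.le_last i)).trans (by linarith)⟩⟩

lemma measurableSet_cyclicSimplex (m : ℕ) : MeasurableSet (cyclicSimplex m) :=
  (measurableSet_le measurable_const (measurable_pi_apply 0)).inter
    ((measurableSet_lt (measurable_pi_apply 0) measurable_const).inter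
      (isClosed_monotone.measurableSet.inter
        (measurableSet_le (measurable_pi_apply _) ((measurable_pi_apply 0).add_const _))))

theorem setIntegral_cyclicSimplex {m : ℕ} {g : Fin (m + 1) → ℝ → ℂ}
    (hg : ∀ i, Continuous (g i)) :
    ∫ θ in cyclicSimplex m, ∏ i, g i (θ i) =
      ∫ t in (0)..(2 * π), g 0 t * iteratedIntegral m (Fin.tail g) t (t + 2 * π) := by
  rw [cyclicSimplex_eq,
    setIntegral_fin_cons (S := fun t => orderedSimplex m t (t + 2 * π)) measurableSet_Ico,
    intervalIntegral.integral_of_le two_pi_pos.le, ← integral_Ico_eq_integral_Ioc]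
  · refine setIntegral_congr_fun measurableSet_Ico fun t ht => ?_
    simp only [Fin.prod_univ_succ, Fin.cons_zero, Fin.cons_succ]
    rw [integral_const_mul,
      setIntegral_orderedSimplex (fun i => hg i.succ) (by linarith [two_pi_pos])]
    rfl
  · rw [← cyclicSimplex_eq]
    exact measurableSet_cyclicSimplex m
  · rw [← cyclicSimplex_eq]
    exact (integrableOn_prod_apply_of_continuous hg (isCompact_orderedSimplex _ _ _)).mono_set
      (cyclicSimplex_subset_orderedSimplex m)

theorem exists_iteratedIntegral_eq_sum_mul {n : ℕ} {g : Fin n → ℝ → ℂ}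
    (hg : ∀ i, HasDiskExtension (g i) 0) :
    ∃ (k : ℕ) (p q : Fin k → ℝ → ℂ), (∀ i, ∃ c, HasDiskExtension (p i) c) ∧
      (∀ i, ∃ c, HasDiskExtension (q i) c) ∧
      ∀ x y, iteratedIntegral n g x y = ∑ i, p i x * q i y := by
  induction n with
  | zero =>
    exact ⟨1, fun _ _ => 1, fun _ _ => 1, fun _ => ⟨1, .const 1⟩, fun _ => ⟨1, .const 1⟩,
      fun _ _ => by simp [iteratedIntegral]⟩
  | succ n ih =>
    obtain ⟨k, p, q, hp, hq, hpq⟩ := ih (g := Fin.tail g) fun i => hg i.succ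
    have hgp : ∀ i, HasDiskExtension (fun t => g 0 t * p i t) 0 := fun i => by
      obtain ⟨c, hc⟩ := hp i
      simpa using (hg 0).mul hc
    choose P hP hPg using fun i => (hgp i).exists_hasDerivAt
    refine ⟨k + k, Fin.append (fun _ _ => 1) (fun i t => -P i t),
      Fin.append (fun i t => P i t * q i t) q, fun i => ?_, fun i => ?_, fun x y => ?_⟩
    · refine Fin.addCases (fun i => ?_) (fun i => ?_) i
      · rw [Fin.append_left]
        exact ⟨1, .const 1⟩
      · obtain ⟨c, hc⟩ := hP i
        rw [Fin.append_right]
        exact ⟨-c, by simpa using (HasDiskExtension.const (-1)).mul hc⟩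
    · refine Fin.addCases (fun i => ?_) (fun i => ?_) i
      · obtain ⟨c, hc⟩ := hP i
        obtain ⟨d, hd⟩ := hq i
        rw [Fin.append_left]
        exact ⟨c * d, hc.mul hd⟩
      · rw [Fin.append_right]
        exact hq i
    · have hderiv : ∀ t, HasDerivAt (fun t => ∑ i, P i t * q i y)
          (∑ i, g 0 t * p i t * q i y) t :=
        fun t => HasDerivAt.fun_sum fun i _ => (hPg i t).mul_const (q i y)
      have hint : IntervalIntegrable (fun t => ∑ i, g 0 t * p i t * q i y) volume x y :=
        (continuous_finsetSum _ fun i _ => (hgp i).continuous.mul continuous_const)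
          |>.intervalIntegrable _ _
      calc iteratedIntegral (n + 1) g x y = ∫ t in x..y, ∑ i, g 0 t * p i t * q i y := by
            simp only [iteratedIntegral, hpq, Finset.mul_sum, mul_assoc]
        _ = ∑ i, P i y * q i y - ∑ i, P i x * q i y :=
            intervalIntegral.integral_eq_sub_of_hasDerivAt (fun t _ => hderiv t) hint
        _ = _ := by
            simp only [Fin.sum_univ_add, Fin.append_left, Fin.append_right, one_mul, neg_mul,
              Finset.sum_neg_distrib, sub_eq_add_neg]

theorem integral_mul_iteratedIntegral_eq_zero {m : ℕ} {g : Fin (m + 1) → ℝ → ℂ}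
    (hg : ∀ i, HasDiskExtension (g i) 0) :
    ∫ t in (0)..(2 * π), g 0 t * iteratedIntegral m (Fin.tail g) t (t + 2 * π) = 0 := by
  obtain ⟨k, p, q, hp, hq, hpq⟩ :=
    exists_iteratedIntegral_eq_sum_mul (g := Fin.tail g) fun i => hg i.succ
  have hterm : ∀ i, HasDiskExtension (fun t => g 0 t * (p i t * q i t)) 0 := fun i => by
    obtain ⟨a, ha⟩ := hp i
    obtain ⟨b, hb⟩ := hq i
    simpa using (hg 0).mul (ha.mul hb)
  have hperiodic : ∀ i t, q i (t + 2 * π) = q i t := fun i => (hq i).choose_spec.periodic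
  calc ∫ t in (0)..(2 * π), g 0 t * iteratedIntegral m (Fin.tail g) t (t + 2 * π)
      = ∫ t in (0)..(2 * π), ∑ i, g 0 t * (p i t * q i t) := by
        simp only [hpq, hperiodic, Finset.mul_sum]
    _ = ∑ i, ∫ t in (0)..(2 * π), g 0 t * (p i t * q i t) :=
        intervalIntegral.integral_finsetSum fun i _ => (hterm i).continuous.intervalIntegrable _ _
    _ = 0 := Finset.sum_eq_zero fun i _ => (hterm i).intervalIntegral_eq_zero

/-- For the circle of radius `r` centered at the origin, traversed counterclockwise, and points
`z₁, ..., zₙ` all outside the circle (`|z_k| > r`), the cyclic iterated integral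
`χ(zₙ,...,z₁) = (1/(2πi)ⁿ) ∫_{cyclically ordered n-tuples on the circle}
  dwₙ/(zₙ − wₙ) ⋯ dw₁/(z₁ − w₁)`
equals `0`.  Here `w_k = r e^{iθ_k}`, `dw_k = i r e^{iθ_k} dθ_k`, and the domain is
`θ₁ ∈ [0,2π)`, `θ₁ ≤ θ₂ ≤ ⋯ ≤ θₙ ≤ θ₁ + 2π`. -/
theorem cyclic_iterated_integral_circle_outside (n : ℕ) (hn : 0 < n) (r : ℝ) (hr : 0 < r)
    (z : Fin n → ℂ) (hz : ∀ k, r < ‖z k‖) :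
    (1 / (2 * (π : ℂ) * Complex.I)) ^ n *
      ∫ θ in {θ : Fin n → ℝ |
          0 ≤ θ ⟨0, hn⟩ ∧ θ ⟨0, hn⟩ < 2 * π ∧
          (∀ i j : Fin n, i ≤ j → θ i ≤ θ j) ∧
          θ ⟨n - 1, Nat.sub_lt hn Nat.one_pos⟩ ≤ θ ⟨0, hn⟩ + 2 * π},
        ∏ k : Fin n,
          (Complex.I * r * Complex.exp (Complex.I * (θ k : ℂ))) /
            (z k - r * Complex.exp (Complex.I * (θ k : ℂ)))
      = 0 := by
  obtain ⟨m, rfl⟩ : ∃ m, n = m + 1 := ⟨n - 1, by omega⟩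
  set g : Fin (m + 1) → ℝ → ℂ := fun k t => I * r * exp (I * t) / (z k - r * exp (I * t))
  have hg : ∀ k, HasDiskExtension (g k) 0 := fun k => hasDiskExtension_kernel hr (hz k)
  change _ * ∫ θ in cyclicSimplex m, ∏ k, g k (θ k) = 0
  rw [setIntegral_cyclicSimplex fun k => (hg k).continuous,
    integral_mul_iteratedIntegral_eq_zero hg, mul_zero]
end

section
/- Let γ : [0,1] → ℂ be a smooth compact curve and χ_γ(z) = (1/(2πi)) ∫_γ dw/(z−w). Then for z₀ in the image of γ, χ_γ(z) = O(log|z − z₀|) as z → z₀; in particular, |χ_γ(z)| ≤ C(1 + |log dist(z, γ)|) for z in a bounded neighborhood of γ, for some constant C depending on γ. -/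
open MeasureTheory Real intervalIntegral Metric


lemma revLip (γ : ℝ → ℂ) (hγ : ContDiff ℝ (⊤ : ℕ∞) γ)
    (himm : ∀ t ∈ Set.Icc (0:ℝ) 1, deriv γ t ≠ 0) :
    ∃ c > (0:ℝ), ∃ δ > (0:ℝ), ∀ s ∈ Set.Icc (0:ℝ) 1, ∀ t ∈ Set.Icc (0:ℝ) 1,
      |t - s| ≤ δ → c * |t - s| ≤ ‖γ t - γ s‖ := by
  have hcont : Continuous (deriv γ) := hγ.continuous_deriv (by simp)
  obtain ⟨t₀, ht₀, hmin⟩ := isCompact_Icc.exists_isMinOn (⟨0, by norm_num⟩ : (Set.Icc (0:ℝ) 1).Nonempty)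
    (hcont.norm.continuousOn)
  set c₀ := ‖deriv γ t₀‖ with hc₀def
  have hc₀ : 0 < c₀ := norm_pos_iff.mpr (himm t₀ ht₀)
  have huc := isCompact_Icc.uniformContinuousOn_of_continuous (hcont.continuousOn :
    ContinuousOn (deriv γ) (Set.Icc (0:ℝ) 1))
  rw [Metric.uniformContinuousOn_iff] at huc
  obtain ⟨δ', hδ', hδ'p⟩ := huc (c₀/2) (by positivity)
  refine ⟨c₀/2, by positivity, δ'/2, by positivity, ?_⟩
  -- first prove for s ≤ t
  have key : ∀ s ∈ Set.Icc (0:ℝ) 1, ∀ t ∈ Set.Icc (0:ℝ) 1, s ≤ t → t - s ≤ δ'/2 →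
      c₀/2 * (t - s) ≤ ‖γ t - γ s‖ := by
    intro s hs t ht hst hd
    set v := deriv γ s with hv
    have hmvt := norm_image_sub_le_of_norm_deriv_le_segment'
      (f := fun x => γ x - x • v) (f' := fun x => deriv γ x - v) (a := s) (b := t) (C := c₀/2)
      ?_ ?_ t (by constructor <;> [exact hst; exact le_refl t])
    · have htri : ‖(t - s) • v‖ ≤ ‖γ t - γ s‖ + ‖(γ t - t • v) - (γ s - s • v)‖ := by
        have : (t - s) • v = (γ t - γ s) - ((γ t - t • v) - (γ s - s • v)) := by
          simp [sub_smul]; ring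
        rw [this]
        exact norm_sub_le _ _
      have hnv : ‖(t - s) • v‖ = (t - s) * ‖v‖ := by
        rw [norm_smul, Real.norm_eq_abs, abs_of_nonneg (by linarith)]
      have hvge : c₀ ≤ ‖v‖ := hmin hs
      nlinarith [hmvt]
    · intro x hx
      have hxI : x ∈ Set.Icc (0:ℝ) 1 := ⟨le_trans hs.1 hx.1, le_trans hx.2 ht.2⟩
      have hdx : HasDerivAt γ (deriv γ x) x :=
        ((hγ.differentiable (by simp)) x).hasDerivAt
      have h2 : HasDerivAt (fun x : ℝ => x • v) v x := by
        simpa using (hasDerivAt_id x).smul_const v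
      exact (hdx.sub h2).hasDerivWithinAt
    · intro x hx
      have hxI : x ∈ Set.Icc (0:ℝ) 1 := ⟨le_trans hs.1 hx.1, le_trans hx.2.le ht.2⟩
      have : dist x s < δ' := by
        rw [Real.dist_eq, abs_of_nonneg (by linarith [hx.1])]
        linarith [hx.2, hδ']
      have := hδ'p x hxI s hs this
      rw [dist_eq_norm] at this
      exact this.le
  intro s hs t ht habs
  rcases le_total s t with h | h
  · have := key s hs t ht h (by rwa [abs_of_nonneg (by linarith)] at habs)
    rwa [abs_of_nonneg (by linarith)]
  · have := key t ht s hs h (by rwa [abs_of_nonpos (by linarith), neg_sub] at habs)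
    rw [abs_of_nonpos (by linarith), neg_sub, norm_sub_rev]
    exact this

lemma affine_integral {d c p q : ℝ} (hd : 0 < d) (hc : 0 < c) (hpq : p ≤ q) :
    ∫ t in p..q, (d + c*(t-p))⁻¹ = (Real.log (d + c*(q-p)) - Real.log d)/c := by
  have hpos : ∀ t ∈ Set.uIcc p q, 0 < d + c*(t-p) := by
    intro t ht
    rw [Set.uIcc_of_le hpq] at ht
    nlinarith [ht.1]
  have hderiv : ∀ t ∈ Set.uIcc p q,
      HasDerivAt (fun t => Real.log (d + c*(t-p)) / c) ((d + c*(t-p))⁻¹) t := by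
    intro t ht
    have h1 : HasDerivAt (fun t => d + c*(t-p)) c t := by
      simpa using ((hasDerivAt_id t).sub_const p).const_mul c |>.const_add d
    have := (h1.log (hpos t ht).ne').div_const c
    have e : c / (d + c * (t - p)) / c = (d + c*(t-p))⁻¹ := by field_simp
    rw [e] at this
    exact this
  have hint : IntervalIntegrable (fun t => (d + c*(t-p))⁻¹) volume p q := by
    apply ContinuousOn.intervalIntegrable
    apply ContinuousOn.inv₀ (by fun_prop)
    intro t ht; exact (hpos t ht).ne'
  rw [intervalIntegral.integral_eq_sub_of_hasDerivAt hderiv hint]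
  simp
  ring

lemma affine_integral' {d c p q : ℝ} (hd : 0 < d) (hc : 0 < c) (hpq : p ≤ q) :
    ∫ t in p..q, (d + c*(q-t))⁻¹ = (Real.log (d + c*(q-p)) - Real.log d)/c := by
  have := intervalIntegral.integral_comp_sub_left (a := p) (b := q)
    (fun u => (d + c*(u-p))⁻¹) (p + q)
  simp only [add_sub_cancel_right, add_sub_cancel_left] at this
  rw [← affine_integral hd hc hpq]
  rw [← this]
  congr 1
  ext t
  ring_nf

lemma interval_bound (γ : ℝ → ℂ) (hγc : Continuous γ) {z : ℂ} {c d R a b : ℝ}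
    (hc : 0 < c) (hd0 : 0 < d) (hd1 : d ≤ 1) (hR : 1 ≤ R)
    (hab : a ≤ b) (hba : b - a ≤ 1)
    (hlip : ∀ s ∈ Set.Icc a b, ∀ t ∈ Set.Icc a b, c * |t - s| ≤ ‖γ t - γ s‖)
    (hglb : ∀ t ∈ Set.Icc a b, d ≤ ‖z - γ t‖)
    (hzR : ∀ t ∈ Set.Icc a b, ‖z - γ t‖ ≤ R) :
    ∫ t in a..b, ‖z - γ t‖⁻¹ ≤ 6/c * ((1 + Real.log (R + c)) * (1 + |Real.log d|)) := by
  obtain ⟨t₀, ht₀, hmin⟩ := isCompact_Icc.exists_isMinOn (⟨a, by constructor <;> simp [hab]⟩ :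
    (Set.Icc a b).Nonempty) ((continuous_const.sub hγc).norm.continuousOn)
  set e := ‖z - γ t₀‖ with he
  have he0 : 0 < e := lt_of_lt_of_le hd0 (hglb t₀ ht₀)
  have heR : e ≤ R := hzR t₀ ht₀
  have hde : d ≤ e := hglb t₀ ht₀
  set J := Real.log (R + c) with hJ
  have hJ0 : 0 ≤ J := Real.log_nonneg (by linarith)
  have hA0 : 0 ≤ |Real.log d| := abs_nonneg _
  have hlogd : -Real.log e ≤ |Real.log d| := by
    have h1 : Real.log d ≤ Real.log e := Real.log_le_log hd0 hde
    have h2 : Real.log d ≤ 0 := Real.log_nonpos hd0.le hd1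
    rw [abs_of_nonpos h2]; linarith
  -- pointwise bound
  have hpt : ∀ t ∈ Set.Icc a b, ‖z - γ t‖⁻¹ ≤ 3 * (e + c*|t - t₀|)⁻¹ := by
    intro t ht
    have h1 : c * |t - t₀| ≤ ‖γ t - γ t₀‖ := hlip t₀ ht₀ t ht
    have h2 : ‖γ t - γ t₀‖ ≤ ‖z - γ t‖ + e := by
      have : γ t - γ t₀ = (z - γ t₀) - (z - γ t) := by ring
      rw [this, norm_sub_rev (z - γ t₀)]
      calc ‖(z - γ t) - (z - γ t₀)‖ ≤ ‖z - γ t‖ + ‖z - γ t₀‖ := norm_sub_le _ _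
        _ = ‖z - γ t‖ + e := rfl
    have h3 : e ≤ ‖z - γ t‖ := hmin ht
    have h4 : (e + c*|t - t₀|)/3 ≤ ‖z - γ t‖ := by linarith
    have h5 : 0 < (e + c*|t - t₀|)/3 := by positivity
    calc ‖z - γ t‖⁻¹ ≤ ((e + c*|t - t₀|)/3)⁻¹ := by
          apply inv_anti₀ h5 h4
      _ = 3 * (e + c*|t - t₀|)⁻¹ := by rw [inv_div]; ring
  -- integrabilities
  have hcont1 : ContinuousOn (fun t => ‖z - γ t‖⁻¹) (Set.Icc a b) := by
    apply ContinuousOn.inv₀ (by fun_prop)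
    intro t ht; exact (lt_of_lt_of_le hd0 (hglb t ht)).ne'
  have hcont2 : ContinuousOn (fun t => 3 * (e + c*|t - t₀|)⁻¹) (Set.Icc a b) := by
    apply ContinuousOn.mul continuousOn_const
    apply ContinuousOn.inv₀ (by fun_prop)
    intro t ht; positivity
  have hint1 : IntervalIntegrable (fun t => ‖z - γ t‖⁻¹) volume a b :=
    (hcont1.mono (by rw [Set.uIcc_of_le hab])).intervalIntegrable
  have hint2 : IntervalIntegrable (fun t => 3 * (e + c*|t - t₀|)⁻¹) volume a b :=
    (hcont2.mono (by rw [Set.uIcc_of_le hab])).intervalIntegrable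
  have step1 : ∫ t in a..b, ‖z - γ t‖⁻¹ ≤ ∫ t in a..b, 3 * (e + c*|t - t₀|)⁻¹ :=
    intervalIntegral.integral_mono_on hab hint1 hint2 hpt
  -- compute the majorant integral by splitting at t₀
  have hintL : IntervalIntegrable (fun t => 3 * (e + c*|t - t₀|)⁻¹) volume a t₀ :=
    hint2.mono_set (by rw [Set.uIcc_of_le ht₀.1, Set.uIcc_of_le hab]; exact Set.Icc_subset_Icc_right ht₀.2)
  have hintR : IntervalIntegrable (fun t => 3 * (e + c*|t - t₀|)⁻¹) volume t₀ b :=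
    hint2.mono_set (by rw [Set.uIcc_of_le ht₀.2, Set.uIcc_of_le hab]; exact Set.Icc_subset_Icc_left ht₀.1)
  have split : ∫ t in a..b, 3 * (e + c*|t - t₀|)⁻¹
      = (∫ t in a..t₀, 3 * (e + c*|t - t₀|)⁻¹) + ∫ t in t₀..b, 3 * (e + c*|t - t₀|)⁻¹ :=
    (intervalIntegral.integral_add_adjacent_intervals hintL hintR).symm
  have hL : ∫ t in a..t₀, 3 * (e + c*|t - t₀|)⁻¹
      = 3 * ((Real.log (e + c*(t₀-a)) - Real.log e)/c) := by
    rw [intervalIntegral.integral_const_mul]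
    congr 1
    rw [← affine_integral' he0 hc ht₀.1]
    apply intervalIntegral.integral_congr
    intro t ht
    rw [Set.uIcc_of_le ht₀.1] at ht
    show (e + c*|t - t₀|)⁻¹ = (e + c*(t₀ - t))⁻¹
    rw [abs_of_nonpos (by linarith [ht.2]), neg_sub]
  have hRt : ∫ t in t₀..b, 3 * (e + c*|t - t₀|)⁻¹
      = 3 * ((Real.log (e + c*(b-t₀)) - Real.log e)/c) := by
    rw [intervalIntegral.integral_const_mul]
    congr 1
    rw [← affine_integral he0 hc ht₀.2]
    apply intervalIntegral.integral_congr
    intro t ht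
    rw [Set.uIcc_of_le ht₀.2] at ht
    show (e + c*|t - t₀|)⁻¹ = (e + c*(t - t₀))⁻¹
    rw [abs_of_nonneg (by linarith [ht.1])]
  -- bound the logs
  have hlogL : Real.log (e + c*(t₀-a)) ≤ J := by
    have h1 : 0 ≤ t₀ - a := by linarith [ht₀.1]
    have h2 : t₀ - a ≤ 1 := by linarith [ht₀.2]
    have h3 : c * (t₀-a) ≤ c := by nlinarith
    have h4 : 0 ≤ c * (t₀-a) := by positivity
    exact Real.log_le_log (by linarith) (by linarith)
  have hlogR : Real.log (e + c*(b-t₀)) ≤ J := by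
    have h1 : 0 ≤ b - t₀ := by linarith [ht₀.2]
    have h2 : b - t₀ ≤ 1 := by linarith [ht₀.1]
    have h3 : c * (b-t₀) ≤ c := by nlinarith
    have h4 : 0 ≤ c * (b-t₀) := by positivity
    exact Real.log_le_log (by linarith) (by linarith)
  calc ∫ t in a..b, ‖z - γ t‖⁻¹ ≤ _ := step1
    _ = 3 * ((Real.log (e + c*(t₀-a)) - Real.log e)/c)
        + 3 * ((Real.log (e + c*(b-t₀)) - Real.log e)/c) := by rw [split, hL, hRt]
    _ ≤ 3 * ((J + |Real.log d|)/c) + 3 * ((J + |Real.log d|)/c) := by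
        gcongr <;> linarith
    _ = 6*(J + |Real.log d|)/c := by ring
    _ ≤ 6*((1 + J) * (1 + |Real.log d|))/c := by
        have hkey : 6*(J + |Real.log d|) ≤ 6*((1 + J) * (1 + |Real.log d|)) := by nlinarith
        gcongr
    _ = 6/c * ((1 + J) * (1 + |Real.log d|)) := by ring

/-- For a smooth immersed compact curve `γ` in `ℂ`, the function
`χ_γ(z) = (1/(2πi)) ∫_γ dw/(z−w)` is `O(log|z − z₀|)` as `z` approaches points `z₀` of `γ`:
there is a constant `C` such that `|χ_γ(z)| ≤ C (1 + |log dist(z, γ)|)` for all `z` not on `γ`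
in a bounded neighborhood of `γ`. -/
theorem chi_gamma_log_bound (γ : ℝ → ℂ) (hγ : ContDiff ℝ (⊤ : ℕ∞) γ)
    (himm : ∀ t ∈ Set.Icc (0:ℝ) 1, deriv γ t ≠ 0) :
    ∃ C : ℝ, ∀ z : ℂ, z ∉ γ '' Set.Icc (0:ℝ) 1 →
      infDist z (γ '' Set.Icc (0:ℝ) 1) ≤ 1 →
      ‖(1 / (2 * (π : ℂ) * Complex.I)) * ∫ t in (0:ℝ)..1, deriv γ t / (z - γ t)‖
        ≤ C * (1 + |Real.log (infDist z (γ '' Set.Icc (0:ℝ) 1))|) := by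
  obtain ⟨c, hc, δ, hδ, hlip⟩ := revLip γ hγ himm
  have hγc : Continuous γ := hγ.continuous
  set K := γ '' Set.Icc (0:ℝ) 1 with hKdef
  have hKcpt : IsCompact K := isCompact_Icc.image hγc
  have hKne : K.Nonempty := ⟨γ 0, 0, Set.mem_Icc.mpr (by norm_num), rfl⟩
  have hcontd : Continuous (deriv γ) := hγ.continuous_deriv (by simp)
  obtain ⟨tM, htM, hmax⟩ := isCompact_Icc.exists_isMaxOn (⟨0, by norm_num⟩ :
    (Set.Icc (0:ℝ) 1).Nonempty) hcontd.norm.continuousOn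
  set M := ‖deriv γ tM‖ with hMdef
  have hM0 : 0 ≤ M := norm_nonneg _
  obtain ⟨N, hN⟩ := exists_nat_one_div_lt hδ
  set n : ℕ := N + 1 with hn
  have hn0 : 0 < (n:ℝ) := by positivity
  have hnδ : 1/(n:ℝ) ≤ δ := by
    rw [hn]; push_cast; exact hN.le
  set R := 1 + Metric.diam K with hRdef
  have hR1 : 1 ≤ R := le_add_of_nonneg_right Metric.diam_nonneg
  set J := Real.log (R + c) with hJdef
  have hJ0 : 0 ≤ J := Real.log_nonneg (by linarith)
  refine ⟨M * n * (6/c) * (1 + J), ?_⟩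
  intro z hz hd1
  set d := infDist z K with hddef
  have hA0 : 0 ≤ |Real.log d| := abs_nonneg _
  have hd0 : 0 < d := (hKcpt.isClosed.notMem_iff_infDist_pos hKne).mp hz
  have hglb : ∀ t ∈ Set.Icc (0:ℝ) 1, d ≤ ‖z - γ t‖ := by
    intro t ht
    rw [← dist_eq_norm]
    exact infDist_le_dist_of_mem ⟨t, ht, rfl⟩
  obtain ⟨w, hw, hwd⟩ := hKcpt.exists_infDist_eq_dist hKne z
  have hzR : ∀ t ∈ Set.Icc (0:ℝ) 1, ‖z - γ t‖ ≤ R := by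
    intro t ht
    rw [← dist_eq_norm]
    calc dist z (γ t) ≤ dist z w + dist w (γ t) := dist_triangle _ _ _
      _ ≤ 1 + diam K := add_le_add (by rw [← hwd]; exact hd1)
          (dist_le_diam_of_mem hKcpt.isBounded hw ⟨t, ht, rfl⟩)
  -- nonvanishing and continuity of the integrand
  have hne : ∀ t ∈ Set.Icc (0:ℝ) 1, ‖z - γ t‖ ≠ 0 := fun t ht =>
    (lt_of_lt_of_le hd0 (hglb t ht)).ne'
  have hne' : ∀ t ∈ Set.Icc (0:ℝ) 1, z - γ t ≠ 0 := fun t ht => by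
    intro h; exact hne t ht (by rw [h, norm_zero])
  set g : ℝ → ℝ := fun t => ‖z - γ t‖⁻¹ with hg
  have hgcont : ContinuousOn g (Set.Icc (0:ℝ) 1) := by
    apply ContinuousOn.inv₀ (by fun_prop)
    exact hne
  -- partition of [0,1]
  set aa : ℕ → ℝ := fun k => k / n with haa
  have haamono : ∀ k : ℕ, aa k ≤ aa (k+1) := by
    intro k
    have h1 : aa k = (k:ℝ)/n := rfl
    have h2 : aa (k+1) = ((k:ℝ)+1)/n := by rw [haa]; push_cast; ring
    rw [h1, h2]
    gcongr
    linarith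
  have hsub : ∀ k, k < n → Set.Icc (aa k) (aa (k+1)) ⊆ Set.Icc (0:ℝ) 1 := by
    intro k hk
    apply Set.Icc_subset_Icc
    · rw [haa]; positivity
    · rw [haa]
      rw [div_le_one hn0]
      exact_mod_cast hk
  have hlen : ∀ k : ℕ, aa (k+1) - aa k = 1/(n:ℝ) := by
    intro k; rw [haa]; push_cast; ring
  have hgint : ∀ k, k < n → IntervalIntegrable g volume (aa k) (aa (k+1)) := by
    intro k hk
    exact ((hgcont.mono (hsub k hk)).mono (by rw [Set.uIcc_of_le (haamono k)])).intervalIntegrable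
  have hsplit : ∫ t in (0:ℝ)..1, g t = ∑ k ∈ Finset.range n, ∫ t in aa k..aa (k+1), g t := by
    rw [intervalIntegral.sum_integral_adjacent_intervals hgint]
    have h0 : aa 0 = 0 := by rw [haa]; simp
    have h1 : aa n = 1 := by rw [haa]; exact div_self hn0.ne'
    rw [h0, h1]
  set B := 6/c * ((1 + J) * (1 + |Real.log d|)) with hB
  have hper : ∀ k, k < n → ∫ t in aa k..aa (k+1), g t ≤ B := by
    intro k hk
    apply interval_bound γ hγc hc hd0 hd1 hR1 (haamono k)
      (by rw [hlen k]; rw [div_le_one hn0]; exact_mod_cast Nat.one_le_iff_ne_zero.mpr (by simp [hn]))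
    · intro s hs t ht
      apply hlip s (hsub k hk hs) t (hsub k hk ht)
      have hthis : |t - s| ≤ aa (k+1) - aa k := by
        rw [abs_sub_le_iff]
        constructor <;> linarith [hs.1, hs.2, ht.1, ht.2]
      rw [hlen k] at hthis
      linarith [hnδ]
    · exact fun t ht => hglb t (hsub k hk ht)
    · exact fun t ht => hzR t (hsub k hk ht)
  -- main chain for the integral
  have hfcont : ContinuousOn (fun t => deriv γ t / (z - γ t)) (Set.Icc (0:ℝ) 1) :=
    hcontd.continuousOn.div (by fun_prop) hne'
  have hint_f : IntervalIntegrable (fun t => ‖deriv γ t / (z - γ t)‖) volume 0 1 :=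
    (hfcont.norm.mono (by rw [Set.uIcc_of_le zero_le_one])).intervalIntegrable
  have hint_Mg : IntervalIntegrable (fun t => M * g t) volume 0 1 :=
    ((continuousOn_const.mul hgcont).mono (by rw [Set.uIcc_of_le zero_le_one])).intervalIntegrable
  have key : ‖∫ t in (0:ℝ)..1, deriv γ t / (z - γ t)‖ ≤ M * ((n:ℝ) * B) := by
    calc ‖∫ t in (0:ℝ)..1, deriv γ t / (z - γ t)‖
        ≤ ∫ t in (0:ℝ)..1, ‖deriv γ t / (z - γ t)‖ :=
          intervalIntegral.norm_integral_le_integral_norm zero_le_one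
      _ ≤ ∫ t in (0:ℝ)..1, M * g t := by
          apply intervalIntegral.integral_mono_on zero_le_one hint_f hint_Mg
          intro t ht
          rw [norm_div, div_eq_mul_inv]
          apply mul_le_mul_of_nonneg_right (hmax ht) (by positivity)
      _ = M * ∫ t in (0:ℝ)..1, g t := intervalIntegral.integral_const_mul _ _
      _ ≤ M * ((n:ℝ) * B) := by
          apply mul_le_mul_of_nonneg_left ?_ hM0
          rw [hsplit]
          calc ∑ k ∈ Finset.range n, ∫ t in aa k..aa (k+1), g t
              ≤ ∑ k ∈ Finset.range n, B := by
                apply Finset.sum_le_sum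
                intro k hk
                exact hper k (Finset.mem_range.mp hk)
            _ = (n:ℝ) * B := by rw [Finset.sum_const, Finset.card_range]; simp
  -- put everything together
  have hconst : ‖(1 / (2 * (π:ℂ) * Complex.I))‖ ≤ 1 := by
    have h2 : ‖(2 * (π:ℂ) * Complex.I)‖ = 2*π := by
      simp [Complex.norm_I, abs_of_nonneg pi_nonneg]
    rw [norm_div, norm_one, h2, div_le_one (by positivity)]
    linarith [pi_gt_three]
  calc ‖(1 / (2 * (π:ℂ) * Complex.I)) * ∫ t in (0:ℝ)..1, deriv γ t / (z - γ t)‖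
      = ‖(1 / (2 * (π:ℂ) * Complex.I))‖ * ‖∫ t in (0:ℝ)..1, deriv γ t / (z - γ t)‖ :=
        norm_mul _ _
    _ ≤ 1 * (M * ((n:ℝ) * B)) := by
        apply mul_le_mul hconst key (norm_nonneg _) zero_le_one
    _ = M * n * (6/c) * (1 + J) * (1 + |Real.log d|) := by rw [hB]; ring
end
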